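/- If X is a compact Hausdorff space such that every perfect subset of X has the NTIP, then X has the CSWP. -/

import Mathlib

open Classical Set

/-- `χ_H ∈ A`. -/
noncomputable def chiMem {X : Type*} [TopologicalSpace X]
    (A : Subalgebra ℂ C(X, ℂ)) (H : Set X) : Prop :=
  ∃ g ∈ A, ∀ x, g x = if x ∈ H then (1 : ℂ) else 0

/-- The non-trivial idempotent property. -/
noncomputable def NTIP (X : Type*) [TopologicalSpace X] : Prop :=
  ∀ A : Subalgebra ℂ C(X, ℂ), IsClosed (A : Set C(X, ℂ)) → A.SeparatesPoints →
    ∃ H : Set X, IsClopen H ∧ H.Nonempty ∧ H ≠ Set.univ ∧ chiMem A H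

/-- The Complex Stone–Weierstrass Property. -/
def CSWP (X : Type*) [TopologicalSpace X] : Prop :=
  ∀ A : Subalgebra ℂ C(X, ℂ), A.SeparatesPoints → Dense (A : Set C(X, ℂ))

/-!
Let `A` be a closed subalgebra of `C(X, ℂ)` separating points. It suffices that the idempotents
`χ_H ∈ A` separate points: being self-adjoint, they generate a star subalgebra of `A` to which
Stone–Weierstrass applies. If they do not separate `x ≠ y`, let `T` be the intersection of the
clopen `H ∋ x` with `χ_H ∈ A`. Then `A` does not split on `T`, i.e. the closure of `A|_T` has no
nontrivial idempotent: iterating `z ↦ z²(3 - 2z)` would turn an approximate idempotent into an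
idempotent of `A` separating points of `T`.

By Zorn's lemma there is a minimal closed `M` on which `A` does not split and on which every
`f ∈ A` attains its maximum modulus over `T`; it has at least two points because `A` separates
`x` and `y`. An isolated point `z` of `M` could be removed: `|f z| ≤ sup_{M \ {z}} |f|` for all
`f ∈ A` (otherwise a power of `f / f z` peaks at `z`), and this domination extends every splitting
of `M \ {z}` to one of `M`. So `M` is perfect, and its NTIP splits `A` on `M`, a contradiction.
-/

namespace ComplexStoneWeierstrass

/-- The cubic with `p 0 = 0`, `p 1 = 1` and `p' 0 = p' 1 = 0`: its iterates converge to `0` near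
`0` and to `1` near `1`. -/
def idemStep {R : Type*} [Ring R] (r : R) : R := r * r * (3 - 2 * r)

lemma idemStep_one_sub {R : Type*} [CommRing R] (r : R) : idemStep (1 - r) = 1 - idemStep r := by
  simp only [idemStep]; ring

lemma iterate_idemStep_one_sub {R : Type*} [CommRing R] (n : ℕ) (r : R) :
    idemStep^[n] (1 - r) = 1 - idemStep^[n] r :=
  have h : Function.Semiconj (fun r : R => 1 - r) idemStep idemStep := fun r =>
    (idemStep_one_sub r).symm
  (h.iterate_right n r).symm

lemma iterate_idemStep_mem {R S : Type*} [Ring R] [SetLike S R] [SubringClass S R] {s : S}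
    {r : R} (hr : r ∈ s) (n : ℕ) : idemStep^[n] r ∈ s := by
  induction n with
  | zero => exact hr
  | succ n ih =>
    rw [Function.iterate_succ_apply']
    exact mul_mem (mul_mem ih ih) (sub_mem (ofNat_mem s 3) (mul_mem (ofNat_mem s 2) ih))

lemma iterate_idemStep_apply {X R : Type*} [TopologicalSpace X] [Ring R] [TopologicalSpace R]
    [IsTopologicalRing R] (n : ℕ) (f : C(X, R)) (x : X) :
    (idemStep^[n] f) x = idemStep^[n] (f x) :=
  congrFun ((Function.Semiconj.iterate_right (f := fun g : C(X, R) => g x)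
    (fun g => by simp [idemStep]; rfl) n).comp_eq) f

lemma norm_idemStep_le {z : ℂ} (hz : ‖z‖ ≤ 1 / 4) : ‖idemStep z‖ ≤ 7 / 8 * ‖z‖ := by
  have h3 : ‖3 - 2 * z‖ ≤ 7 / 2 := by
    calc ‖3 - 2 * z‖ ≤ ‖(3 : ℂ)‖ + ‖2 * z‖ := norm_sub_le _ _
      _ = 3 + 2 * ‖z‖ := by simp
      _ ≤ 7 / 2 := by linarith
  rw [idemStep, norm_mul, norm_mul]
  have := norm_nonneg z
  nlinarith [mul_le_mul_of_nonneg_left h3 (mul_nonneg this this)]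

lemma norm_iterate_idemStep_le {z : ℂ} (hz : ‖z‖ ≤ 1 / 4) (n : ℕ) :
    ‖idemStep^[n] z‖ ≤ (7 / 8) ^ n * ‖z‖ := by
  induction n generalizing z with
  | zero => simp
  | succ n ih =>
    have h := norm_idemStep_le hz
    rw [Function.iterate_succ_apply, pow_succ, mul_assoc]
    exact (ih (by linarith [norm_nonneg z])).trans (by gcongr)

lemma norm_iterate_idemStep_sub_one_le {z : ℂ} (hz : ‖z - 1‖ ≤ 1 / 4) (n : ℕ) :
    ‖idemStep^[n] z - 1‖ ≤ (7 / 8) ^ n * ‖z - 1‖ := by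
  rw [norm_sub_rev] at hz
  rw [norm_sub_rev (idemStep^[n] z), norm_sub_rev z]
  simpa [iterate_idemStep_one_sub] using norm_iterate_idemStep_le hz n

lemma one_le_norm_add_norm_sub_one (z : ℂ) : 1 ≤ ‖z‖ + ‖z - 1‖ := by
  simpa [norm_sub_rev] using norm_le_norm_add_norm_sub' (1 : ℂ) z

lemma norm_mul_sub_one_le {w : ℂ} {δ : ℝ} (h : ‖w‖ ≤ δ ∨ ‖w - 1‖ ≤ δ) :
    ‖w * (w - 1)‖ ≤ δ * (1 + δ) := by
  have h₀ : ‖w‖ ≤ 1 + ‖w - 1‖ := by simpa using norm_le_norm_add_norm_sub' w 1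
  have h₁ : ‖w - 1‖ ≤ ‖w‖ + 1 := by simpa using norm_sub_le w 1
  rw [norm_mul]
  rcases h with h | h
  · exact mul_le_mul h (by linarith) (norm_nonneg _) ((norm_nonneg _).trans h)
  · rw [mul_comm δ]
    exact mul_le_mul (by linarith) h (norm_nonneg _) (by linarith [norm_nonneg (w - 1)])

lemma norm_lt_or_norm_sub_one_lt {w : ℂ} (h : ‖w * (w - 1)‖ < 1 / 16) :
    ‖w‖ < 1 / 4 ∨ ‖w - 1‖ < 1 / 4 := by
  by_contra! hw
  rw [norm_mul] at h
  nlinarith [mul_le_mul hw.1 hw.2 (by norm_num) (norm_nonneg w)]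

lemma exists_isClosed_sdiff_singleton {X : Type*} [TopologicalSpace X] {M : Set X}
    (hM : IsClosed M) (h : ¬ Preperfect M) : ∃ z ∈ M, IsClosed (M \ {z}) := by
  simp only [Preperfect, not_forall] at h
  obtain ⟨z, hz, hacc⟩ := h
  refine ⟨z, hz, isClosed_of_closure_subset fun y hy =>
    ⟨hM.closure_subset_iff.mpr sdiff_subset hy, ?_⟩⟩
  rintro rfl
  exact hacc (accPt_principal_iff_clusterPt.mpr (mem_closure_iff_clusterPt.mp hy))

section Splitting

variable {X : Type*} [TopologicalSpace X] {A : Subalgebra ℂ C(X, ℂ)} {K W : Set X}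
  {a : C(X, ℂ)}

def nearIdempotentSet (a : C(X, ℂ)) : Set X := {x | ‖a x‖ < 1 / 4 ∨ ‖a x - 1‖ < 1 / 4}

lemma isOpen_nearIdempotentSet (a : C(X, ℂ)) : IsOpen (nearIdempotentSet a) := by
  unfold nearIdempotentSet
  rw [ofPred_or]
  exact (isOpen_lt (by fun_prop) continuous_const).union (isOpen_lt (by fun_prop) continuous_const)

def ApproxIndicator (A : Subalgebra ℂ C(X, ℂ)) (K W : Set X) : Prop :=
  ∀ ε > 0, ∃ a ∈ A, (∀ x ∈ K ∩ W, ‖a x - 1‖ ≤ ε) ∧ ∀ x ∈ K \ W, ‖a x‖ ≤ ε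

/-- The closure of the restriction of `A` to `K` contains an idempotent other than `0` and `1`. -/
def Splits (A : Subalgebra ℂ C(X, ℂ)) (K : Set X) : Prop :=
  ∃ W, ApproxIndicator A K W ∧ (K ∩ W).Nonempty ∧ (K \ W).Nonempty

lemma subset_nearIdempotentSet_of_le {ε : ℝ} (hε : ε < 1 / 4)
    (h₁ : ∀ x ∈ K ∩ W, ‖a x - 1‖ ≤ ε) (h₀ : ∀ x ∈ K \ W, ‖a x‖ ≤ ε) :
    K ⊆ nearIdempotentSet a := fun x hx => by
  by_cases hxW : x ∈ W
  · exact Or.inr ((h₁ x ⟨hx, hxW⟩).trans_lt hε)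
  · exact Or.inl ((h₀ x ⟨hx, hxW⟩).trans_lt hε)

lemma approxIndicator_of_subset_nearIdempotentSet (ha : a ∈ A) (hK : K ⊆ nearIdempotentSet a) :
    ApproxIndicator A K {x | ‖a x - 1‖ < 1 / 4} := by
  intro ε hε
  obtain ⟨n, hn⟩ := exists_pow_lt_of_lt_one (by positivity : 0 < 4 * ε)
    (by norm_num : (7 / 8 : ℝ) < 1)
  have hpow : 0 ≤ (7 / 8 : ℝ) ^ n := by positivity
  refine ⟨idemStep^[n] a, iterate_idemStep_mem ha n, fun x hx => ?_, fun x hx => ?_⟩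
  · have h₁ : ‖a x - 1‖ < 1 / 4 := hx.2
    rw [iterate_idemStep_apply]
    nlinarith [norm_iterate_idemStep_sub_one_le h₁.le n]
  · have h₀ : ‖a x‖ < 1 / 4 := (hK hx.1).resolve_right hx.2
    rw [iterate_idemStep_apply]
    nlinarith [norm_iterate_idemStep_le h₀.le n]

lemma splits_of_subset_nearIdempotentSet (ha : a ∈ A) (hK : K ⊆ nearIdempotentSet a)
    {u v : X} (hu : u ∈ K) (hu₁ : ‖a u - 1‖ < 1 / 4) (hv : v ∈ K) (hv₀ : ‖a v‖ < 1 / 4) :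
    Splits A K :=
  ⟨_, approxIndicator_of_subset_nearIdempotentSet ha hK, ⟨u, hu, hu₁⟩,
    ⟨v, hv, fun hv₁ => by linarith [one_le_norm_add_norm_sub_one (a v), mem_ofPred.mp hv₁]⟩⟩

def IsBoundary (A : Subalgebra ℂ C(X, ℂ)) (T K : Set X) : Prop :=
  ∀ f ∈ A, ∃ p ∈ K, ∀ q ∈ T, ‖f q‖ ≤ ‖f p‖

lemma IsBoundary.nontrivial (hsep : A.SeparatesPoints) {T M : Set X} (h : IsBoundary A T M)
    (hT : T.Nontrivial) : M.Nontrivial := by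
  obtain ⟨x, hx, y, hy, hxy⟩ := hT
  obtain ⟨_, ⟨f, hf, rfl⟩, hfxy⟩ := hsep hxy
  by_contra hM
  rw [not_nontrivial_iff] at hM
  obtain ⟨p, hp, -⟩ := h 1 (one_mem A)
  obtain ⟨p', hp', hmax⟩ := h (f - algebraMap ℂ _ (f p)) (sub_mem hf (algebraMap_mem A _))
  rw [hM hp' hp] at hmax
  have hconst (q : X) (hq : q ∈ T) : f q = f p := by simpa [sub_eq_zero] using hmax q hq
  exact hfxy ((hconst x hx).trans (hconst y hy).symm)

lemma IsBoundary.of_insert {T N : Set X} {z : X} (h : IsBoundary A T (insert z N))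
    (hdom : ∀ f ∈ A, ∃ p ∈ N, ‖f z‖ ≤ ‖f p‖) : IsBoundary A T N := by
  intro f hf
  obtain ⟨p, rfl | hp, hmax⟩ := h f hf
  · obtain ⟨p', hp', hle⟩ := hdom f hf
    exact ⟨p', hp', fun q hq => (hmax q hq).trans hle⟩
  · exact ⟨p, hp, hmax⟩

/-- The domination, applied to `a (a - 1)`, keeps an approximate idempotent on `N` near `0` or `1`
at `z`. -/
lemma splits_insert {N : Set X} {z : X} (hdom : ∀ f ∈ A, ∃ p ∈ N, ‖f z‖ ≤ ‖f p‖)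
    (h : Splits A N) : Splits A (insert z N) := by
  obtain ⟨W, hW, ⟨u, hu, huW⟩, ⟨v, hv, hvW⟩⟩ := h
  obtain ⟨a, ha, h₁, h₀⟩ := hW (1 / 20) (by norm_num)
  obtain ⟨p, hp, hzp⟩ := hdom (a * (a - 1)) (mul_mem ha (sub_mem ha (one_mem A)))
  have hpW : ‖a p‖ ≤ 1 / 20 ∨ ‖a p - 1‖ ≤ 1 / 20 := by
    by_cases hpW : p ∈ W
    · exact Or.inr (h₁ p ⟨hp, hpW⟩)
    · exact Or.inl (h₀ p ⟨hp, hpW⟩)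
  have hz : z ∈ nearIdempotentSet a := norm_lt_or_norm_sub_one_lt <| by
    simpa using hzp.trans_lt ((norm_mul_sub_one_le hpW).trans_lt (by norm_num))
  exact splits_of_subset_nearIdempotentSet ha
    (insert_subset hz (subset_nearIdempotentSet_of_le (by norm_num) h₁ h₀))
    (mem_insert_of_mem z hu) (by linarith [h₁ u ⟨hu, huW⟩])
    (mem_insert_of_mem z hv) (by linarith [h₀ v ⟨hv, hvW⟩])

end Splitting

section Idempotents

variable {X : Type*} [TopologicalSpace X] {A : Subalgebra ℂ C(X, ℂ)} {H G : Set X}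

lemma isClopen_of_chiMem (h : chiMem A H) : IsClopen H := by
  obtain ⟨g, -, hg⟩ := h
  have h₁ : H = g ⁻¹' {1} := by ext x; by_cases hx : x ∈ H <;> simp [hg, hx]
  have h₀ : H = g ⁻¹' {0}ᶜ := by ext x; by_cases hx : x ∈ H <;> simp [hg, hx]
  exact ⟨h₁ ▸ isClosed_singleton.preimage g.continuous,
    h₀ ▸ isOpen_compl_singleton.preimage g.continuous⟩

lemma chiMem_univ : chiMem A univ := ⟨1, one_mem A, by simp⟩

lemma chiMem_inter (hH : chiMem A H) (hG : chiMem A G) : chiMem A (H ∩ G) := by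
  obtain ⟨g, hgA, hg⟩ := hH
  obtain ⟨g', hg'A, hg'⟩ := hG
  refine ⟨g * g', mul_mem hgA hg'A, fun x => ?_⟩
  by_cases hx : x ∈ H <;> by_cases hx' : x ∈ G <;> simp [hg, hg', hx, hx']

lemma chiMem_compl (hH : chiMem A H) : chiMem A Hᶜ := by
  obtain ⟨g, hgA, hg⟩ := hH
  refine ⟨1 - g, sub_mem (one_mem A) hgA, fun x => ?_⟩
  by_cases hx : x ∈ H <;> simp [hg, hx]

lemma isClopen_inter_setOf_of_subset {a : C(X, ℂ)} (hH : IsClopen H)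
    (hHa : H ⊆ nearIdempotentSet a) : IsClopen (H ∩ {x | ‖a x - 1‖ < 1 / 4}) := by
  have hc : H ∩ {x | ‖a x - 1‖ < 1 / 4} = H ∩ {x | ‖a x‖ < 1 / 4}ᶜ := by
    ext x
    refine and_congr_right fun hx => ⟨fun h₁ h₀ => ?_, fun h₀ => (hHa hx).resolve_left h₀⟩
    linarith [one_le_norm_add_norm_sub_one (a x), mem_ofPred.mp h₀, mem_ofPred.mp h₁]
  exact ⟨hc ▸ hH.isClosed.inter (isOpen_lt (by fun_prop) continuous_const).isClosed_compl,
    hH.isOpen.inter (isOpen_lt (by fun_prop) continuous_const)⟩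

end Idempotents

section Compact

variable {X : Type*} [TopologicalSpace X] [CompactSpace X] {A : Subalgebra ℂ C(X, ℂ)}
  {H W : Set X}

lemma exists_mem_subset_of_sInter_subset {c : Set (Set X)}
    (hd : DirectedOn (· ⊇ ·) c) (hne : c.Nonempty) (hcl : ∀ K ∈ c, IsClosed K) {U : Set X}
    (hU : IsOpen U) (h : ⋂₀ c ⊆ U) : ∃ K ∈ c, K ⊆ U := by
  have := hne.to_subtype
  obtain ⟨⟨K, hK⟩, hKU⟩ := exists_subset_nhds_of_isCompact' (V := fun K : c => (K : Set X))
    hd.directed_val (fun K => (hcl K K.2).isCompact) (fun K => hcl K K.2)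
    (fun x hx => hU.mem_nhds (h (by rwa [sInter_eq_iInter])))
  exact ⟨K, hK, hKU⟩

lemma not_splits_sInter {c : Set (Set X)} (hd : DirectedOn (· ⊇ ·) c)
    (hne : c.Nonempty) (hcl : ∀ K ∈ c, IsClosed K) (h : ∀ K ∈ c, ¬ Splits A K) :
    ¬ Splits A (⋂₀ c) := by
  rintro ⟨W, hW, ⟨u, hu, huW⟩, ⟨v, hv, hvW⟩⟩
  obtain ⟨a, ha, h₁, h₀⟩ := hW (1 / 5) (by norm_num)
  obtain ⟨K, hKc, hKa⟩ := exists_mem_subset_of_sInter_subset hd hne hcl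
    (isOpen_nearIdempotentSet a) (subset_nearIdempotentSet_of_le (by norm_num) h₁ h₀)
  exact h K hKc (splits_of_subset_nearIdempotentSet ha hKa (sInter_subset_of_mem hKc hu)
    (by linarith [h₁ u ⟨hu, huW⟩]) (sInter_subset_of_mem hKc hv) (by linarith [h₀ v ⟨hv, hvW⟩]))

lemma chiMem_inter_of_approxIndicator (hA : IsClosed (A : Set C(X, ℂ)))
    (hH : chiMem A H) (hHW : IsClopen (H ∩ W)) (hW : ApproxIndicator A H W) :
    chiMem A (H ∩ W) := by
  obtain ⟨g, hgA, hg⟩ := hH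
  let e : C(X, ℂ) := LocallyConstant.charFn ℂ hHW
  have he (x : X) : e x = (H ∩ W).indicator 1 x := rfl
  refine ⟨e, hA.closure_subset_iff.mpr le_rfl (Metric.mem_closure_iff.mpr fun ε hε => ?_),
    fun x => by simp [he, Set.indicator]⟩
  obtain ⟨a, haA, ha₁, ha₀⟩ := hW (ε / 2) (by positivity)
  refine ⟨g * a, mul_mem hgA haA, ?_⟩
  refine ((ContinuousMap.dist_le (C := ε / 2) (by positivity)).mpr fun x => ?_).trans_lt
    (by linarith)
  rw [dist_eq_norm', ContinuousMap.mul_apply, he, hg]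
  by_cases hxH : x ∈ H
  · by_cases hxW : x ∈ W
    · simpa [hxH, hxW] using ha₁ x ⟨hxH, hxW⟩
    · simpa [hxH, hxW] using ha₀ x ⟨hxH, hxW⟩
  · simpa [hxH] using (half_pos hε).le

/-- If `a` witnessed a splitting, `χ_H · idemStep^[n] a` would converge to the indicator of a
clopen set separating two points of the intersection. -/
lemma not_splits_sInter_chiMem (hA : IsClosed (A : Set C(X, ℂ))) (x : X) :
    ¬ Splits A (⋂₀ {H | chiMem A H ∧ x ∈ H}) := by
  set F := {H | chiMem A H ∧ x ∈ H}
  have hF {H : Set X} (hH : chiMem A H) (hxH : x ∈ H) : ⋂₀ F ⊆ H := sInter_subset_of_mem ⟨hH, hxH⟩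
  rintro ⟨W, hW, ⟨u, hu, huW⟩, ⟨v, hv, hvW⟩⟩
  obtain ⟨a, ha, h₁, h₀⟩ := hW (1 / 5) (by norm_num)
  obtain ⟨H, ⟨hH, hxH⟩, hHa⟩ := exists_mem_subset_of_sInter_subset (c := F)
    (fun H₁ h₁ H₂ h₂ => ⟨H₁ ∩ H₂, ⟨chiMem_inter h₁.1 h₂.1, h₁.2, h₂.2⟩, inter_subset_left,
      inter_subset_right⟩)
    ⟨univ, chiMem_univ, mem_univ x⟩ (fun H h => (isClopen_of_chiMem h.1).isClosed)
    (isOpen_nearIdempotentSet a) (subset_nearIdempotentSet_of_le (by norm_num) h₁ h₀)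
  have hG := chiMem_inter_of_approxIndicator hA hH
    (isClopen_inter_setOf_of_subset (isClopen_of_chiMem hH) hHa)
    (approxIndicator_of_subset_nearIdempotentSet ha hHa)
  have hu₁ := h₁ u ⟨hu, huW⟩
  have hv₀ := h₀ v ⟨hv, hvW⟩
  by_cases hxG : x ∈ H ∩ {y | ‖a y - 1‖ < 1 / 4}
  · have hvG := (hF hG hxG hv).2
    linarith [one_le_norm_add_norm_sub_one (a v), mem_ofPred.mp hvG]
  · exact hF (chiMem_compl hG) hxG hu ⟨hF hH hxH hu, show ‖a u - 1‖ < 1 / 4 by linarith⟩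

lemma splits_of_ntip (hsep : A.SeparatesPoints) {M : Set X} (hM : IsClosed M) (h : NTIP M) :
    Splits A M := by
  have : CompactSpace M := isCompact_iff_compactSpace.mp hM.isCompact
  let ρ : C(X, ℂ) →ₐ[ℂ] C(M, ℂ) :=
    ContinuousMap.compRightAlgHom ℂ ℂ ⟨Subtype.val, continuous_subtype_val⟩
  have hBsep : (A.map ρ).topologicalClosure.SeparatesPoints := by
    refine Subalgebra.separatesPoints_monotone (A.map ρ).le_topologicalClosure fun u v huv => ?_
    obtain ⟨_, ⟨f, hf, rfl⟩, hfuv⟩ := hsep (Subtype.val_injective.ne huv)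
    exact ⟨_, ⟨ρ f, ⟨f, hf, rfl⟩, rfl⟩, hfuv⟩
  obtain ⟨H, -, ⟨u, hu⟩, hHne, g, hgB, hg⟩ :=
    h _ (A.map ρ).isClosed_topologicalClosure hBsep
  obtain ⟨v, hv⟩ := (ne_univ_iff_exists_notMem H).mp hHne
  refine ⟨Subtype.val '' H, fun ε hε => ?_, ⟨u, u.2, u, hu, rfl⟩,
    ⟨v, v.2, fun ⟨w, hw, hwv⟩ => hv (Subtype.val_injective hwv ▸ hw)⟩⟩
  rw [← SetLike.mem_coe, Subalgebra.topologicalClosure_coe] at hgB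
  obtain ⟨_, ⟨f, hf, rfl⟩, hfg⟩ := Metric.mem_closure_iff.mp hgB ε hε
  have hclose (w : M) : ‖f w - g w‖ ≤ ε := by
    rw [← dist_eq_norm, dist_comm]
    exact (ContinuousMap.dist_apply_le_dist w).trans hfg.le
  refine ⟨f, hf, ?_, ?_⟩
  · rintro _ ⟨-, w, hw, rfl⟩
    simpa [hg, hw] using hclose w
  · rintro x ⟨hxM, hx⟩
    have hxH : (⟨x, hxM⟩ : M) ∉ H := fun h => hx ⟨_, h, rfl⟩
    simpa [hg, hxH] using hclose ⟨x, hxM⟩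

lemma isBoundary_self {T : Set X} (hT : IsClosed T) (hne : T.Nonempty) : IsBoundary A T T :=
  fun f _ => (hT.isCompact.exists_isMaxOn hne f.continuous.norm.continuousOn).imp
    fun _ ⟨hp, hmax⟩ => ⟨hp, fun _ hq => hmax hq⟩

lemma isBoundary_sInter {T : Set X} {c : Set (Set X)} (hd : DirectedOn (· ⊇ ·) c)
    (hne : c.Nonempty) (hcl : ∀ K ∈ c, IsClosed K) (h : ∀ K ∈ c, IsBoundary A T K) :
    IsBoundary A T (⋂₀ c) := by
  intro f hf
  have := hne.to_subtype
  let S := {p | ∀ q ∈ T, ‖f q‖ ≤ ‖f p‖}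
  have hS : IsClosed S := by
    simp only [S, ofPred_forall]
    exact isClosed_biInter fun q _ => isClosed_le continuous_const (by fun_prop)
  obtain ⟨p, hp⟩ := IsCompact.nonempty_iInter_of_directed_nonempty_isCompact_isClosed
    (fun K : c => (K : Set X) ∩ S)
    (Directed.mono_comp (· ⊇ ·) (g := (· ∩ S)) (fun _ _ h => inter_subset_inter_left S h)
      hd.directed_val)
    (fun K => (h K K.2 f hf).imp fun _ ⟨hp, hmax⟩ => ⟨hp, hmax⟩)
    (fun K => ((hcl K K.2).inter hS).isCompact) (fun K => (hcl K K.2).inter hS)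
  rw [mem_iInter] at hp
  exact ⟨p, mem_sInter.mpr fun K hK => (hp ⟨K, hK⟩).1, (hp ⟨_, hne.some_mem⟩).2⟩

/-- Otherwise a power of `f / f z` would peak at `z`, splitting `insert z N` at `{z}`. -/
lemma exists_norm_le_of_not_splits_insert {N : Set X} {z : X} (hs : ¬ Splits A (insert z N))
    (hN : IsClosed N) (hNne : N.Nonempty) : ∀ f ∈ A, ∃ p ∈ N, ‖f z‖ ≤ ‖f p‖ := by
  intro f hf
  by_contra! hlt
  obtain ⟨p₀, hp₀, hmax⟩ := hN.isCompact.exists_isMaxOn hNne f.continuous.norm.continuousOn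
  have hfz : 0 < ‖f z‖ := (norm_nonneg _).trans_lt (hlt p₀ hp₀)
  obtain ⟨k, hk⟩ := exists_pow_lt_of_lt_one (by norm_num : (0 : ℝ) < 1 / 4)
    ((div_lt_one hfz).mpr (hlt p₀ hp₀))
  let b := ((f z)⁻¹ • f) ^ k
  have hb (x : X) : b x = (f x / f z) ^ k := by simp [b, div_eq_inv_mul]
  have hbz : b z = 1 := by simp [hb, div_self (norm_pos_iff.mp hfz)]
  have hbN (p : X) (hp : p ∈ N) : ‖b p‖ < 1 / 4 := by
    rw [hb, norm_pow, norm_div]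
    calc (‖f p‖ / ‖f z‖) ^ k ≤ (‖f p₀‖ / ‖f z‖) ^ k := by gcongr; exact hmax hp
      _ < 1 / 4 := hk
  have hbz' : ‖b z - 1‖ < 1 / 4 := by rw [hbz, sub_self, norm_zero]; norm_num
  refine hs (splits_of_subset_nearIdempotentSet (pow_mem (A.smul_mem hf _) k) ?_
    (mem_insert z N) hbz' (mem_insert_of_mem z hp₀) (hbN p₀ hp₀))
  rintro x (rfl | hx)
  · exact Or.inr hbz'
  · exact Or.inl (hbN x hx)

lemma splits_of_forall_perfect_ntip (hsep : A.SeparatesPoints)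
    (hP : ∀ P : Set X, Perfect P → P.Nonempty → NTIP P) {T : Set X} (hT : IsClosed T)
    (hTnt : T.Nontrivial) : Splits A T := by
  by_contra hTs
  have hd {c : Set (Set X)} (hc : IsChain (· ⊆ ·) c) : DirectedOn (· ⊇ ·) c :=
    fun K hK L hL => (hc.total hK hL).elim (fun h => ⟨K, hK, subset_rfl, h⟩)
      fun h => ⟨L, hL, h, subset_rfl⟩
  let C : Set (Set X) := {K | IsClosed K ∧ IsBoundary A T K ∧ ¬ Splits A K}
  obtain ⟨M, -, ⟨hMcl, hMb, hMs⟩, hmin⟩ := zorn_superset_nonempty C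
    (fun c hcC hc hne => ⟨⋂₀ c, ⟨isClosed_sInter fun K hK => (hcC hK).1,
      isBoundary_sInter (hd hc) hne (fun K hK => (hcC hK).1) (fun K hK => (hcC hK).2.1),
      not_splits_sInter (hd hc) hne (fun K hK => (hcC hK).1)
        (fun K hK => (hcC hK).2.2)⟩, fun K hK => sInter_subset_of_mem hK⟩)
    T ⟨hT, isBoundary_self hT hTnt.nonempty, hTs⟩
  have hMnt := hMb.nontrivial hsep hTnt
  by_cases hperf : Preperfect M
  · exact hMs (splits_of_ntip hsep hMcl (hP M ⟨hMcl, hperf⟩ hMnt.nonempty))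
  obtain ⟨z, hzM, hzN⟩ := exists_isClosed_sdiff_singleton hMcl hperf
  have hNne : (M \ {z}).Nonempty := (hMnt.exists_ne z).imp fun _ ⟨hy, hyz⟩ => ⟨hy, hyz⟩
  have hM : insert z (M \ {z}) = M := by rw [insert_sdiff_singleton, insert_eq_of_mem hzM]
  rw [← hM] at hMs hMb
  have hdom := exists_norm_le_of_not_splits_insert hMs hzN hNne
  have hN : M \ {z} ∈ C := ⟨hzN, hMb.of_insert hdom, fun h => hMs (splits_insert hdom h)⟩
  exact (hmin hN sdiff_subset hzM).2 rfl

lemma exists_chiMem_separating (hA : IsClosed (A : Set C(X, ℂ))) (hsep : A.SeparatesPoints)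
    (hP : ∀ P : Set X, Perfect P → P.Nonempty → NTIP P) {x y : X} (hxy : x ≠ y) :
    ∃ H, chiMem A H ∧ x ∈ H ∧ y ∉ H := by
  by_contra! h
  exact not_splits_sInter_chiMem hA x <| splits_of_forall_perfect_ntip hsep hP
    (isClosed_sInter fun H hH => (isClopen_of_chiMem hH.1).isClosed)
    ⟨x, fun H hH => hH.2, y, fun H hH => h H hH.1 hH.2, hxy⟩

lemma dense_of_chiMem_separating (h : ∀ x y : X, x ≠ y → ∃ H, chiMem A H ∧ x ∈ H ∧ y ∉ H) :
    Dense (A : Set C(X, ℂ)) := by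
  let S : Set C(X, ℂ) := {f | f ∈ A ∧ IsSelfAdjoint f}
  have hSA : ((StarAlgebra.adjoin ℂ S).toSubalgebra : Set C(X, ℂ)) ⊆ A := by
    rw [StarAlgebra.adjoin_toSubalgebra]
    refine Algebra.adjoin_le (union_subset (fun f hf => hf.1) fun f hf => ?_)
    have hfsa : IsSelfAdjoint f := IsSelfAdjoint.star_iff.mp hf.2
    simpa [hfsa.star_eq] using hf.1
  have hsepS : (StarAlgebra.adjoin ℂ S).SeparatesPoints := fun x y hxy => by
    obtain ⟨H, ⟨g, hgA, hg⟩, hx, hy⟩ := h x y hxy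
    have hgsa : IsSelfAdjoint g := ContinuousMap.ext fun w => by
      by_cases hw : w ∈ H <;> simp [hg, hw]
    exact ⟨g, ⟨g, StarAlgebra.subset_adjoin ℂ S ⟨hgA, hgsa⟩, rfl⟩, by simp [hg, hx, hy]⟩
  have htop := ContinuousMap.starSubalgebra_topologicalClosure_eq_top_of_separatesPoints _ hsepS
  refine dense_iff_closure_eq.mpr (eq_univ_of_forall fun f => closure_mono hSA ?_)
  change f ∈ closure (StarAlgebra.adjoin ℂ S : Set C(X, ℂ))
  rw [← StarSubalgebra.topologicalClosure_coe, htop]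
  trivial

end Compact

end ComplexStoneWeierstrass

open ComplexStoneWeierstrass in
theorem stmt12_general {X : Type*} [TopologicalSpace X] [CompactSpace X]
    (h : ∀ P : Set X, Perfect P → P.Nonempty → NTIP P) : CSWP X := by
  intro A hA
  have hsep : A.topologicalClosure.SeparatesPoints :=
    Subalgebra.separatesPoints_monotone A.le_topologicalClosure hA
  have hdense := dense_of_chiMem_separating fun x y hxy =>
    exists_chiMem_separating A.isClosed_topologicalClosure hsep h hxy
  rw [Subalgebra.topologicalClosure_coe] at hdense
  exact hdense.of_closure

/-- If `X` is compact Hausdorff and every (nonempty) perfect subset of `X` has the NTIP,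
then `X` has the CSWP. -/
theorem stmt12 {X : Type*} [TopologicalSpace X] [CompactSpace X] [T2Space X]
    (h : ∀ P : Set X, Perfect P → P.Nonempty → NTIP P) : CSWP X :=
  stmt12_general h
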